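/- Let 0 < p ≤ 2 and let f ∈ H^p(δ²) have atomic decomposition (f_n, R_n)_{n∈ℤ}. Define g = (g_{IJ}) by g_{IJ} = 2^{−n(2−p)/2} f_{IJ} for I×J ∈ R_n, and g_{IJ} = 0 if I×J lies in no R_n. Then there is a constant c_p > 0, depending only on p, such that ‖g‖₂² ≤ c_p · ‖f‖_{H^p(δ²)}^p. -/

import Mathlib

open MeasureTheory Set
open scoped ENNReal

/-- A dyadic interval `[k/2^n, (k+1)/2^n) ⊆ [0,1)`. -/
structure DyadicInterval where
  n : ℕ
  k : ℕ
  hk : k < 2 ^ n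

namespace DyadicInterval

/-- Left endpoint. -/
noncomputable def left (I : DyadicInterval) : ℝ := I.k / 2 ^ I.n

/-- Right endpoint. -/
noncomputable def right (I : DyadicInterval) : ℝ := (I.k + 1) / 2 ^ I.n

/-- Midpoint. -/
noncomputable def mid (I : DyadicInterval) : ℝ := (I.k + 1 / 2) / 2 ^ I.n

/-- The underlying point set of the dyadic interval. -/
noncomputable def set (I : DyadicInterval) : Set ℝ := Set.Ico I.left I.right

/-- The length `|I| = 2^{-n}`. -/
noncomputable def len (I : DyadicInterval) : ℝ := 1 / 2 ^ I.n

/-- The `L^∞`-normalised Haar function `h_I`: `+1` on the left half of `I`,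
`-1` on the right half of `I`, `0` elsewhere. -/
noncomputable def haar (I : DyadicInterval) (s : ℝ) : ℝ :=
  if s ∈ Set.Ico I.left I.mid then 1
  else if s ∈ Set.Ico I.mid I.right then -1
  else 0

end DyadicInterval

/-- A dyadic rectangle `I × J`. -/
abbrev DyadicRect := DyadicInterval × DyadicInterval

namespace DyadicRect

/-- The underlying point set of the dyadic rectangle. -/
noncomputable def set (R : DyadicRect) : Set (ℝ × ℝ) := R.1.set ×ˢ R.2.set

/-- The area `|I||J|`. -/
noncomputable def area (R : DyadicRect) : ℝ := R.1.len * R.2.len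

/-- The 2D Haar function `h_{I×J}(s,t) = h_I(s) h_J(t)`. -/
noncomputable def haar (R : DyadicRect) (x : ℝ × ℝ) : ℝ := R.1.haar x.1 * R.2.haar x.2

end DyadicRect

/-- The unit square `[0,1]²`. -/
noncomputable def unitSq : Set (ℝ × ℝ) := Set.Icc (0:ℝ) 1 ×ˢ Set.Icc (0:ℝ) 1

/-- The square function `S(f)(s,t) = (∑_{I×J} f_{I×J}² 1_{I×J}(s,t))^{1/2}`,
valued in `ℝ≥0∞`. -/
noncomputable def sqS (f : DyadicRect → ℝ) (x : ℝ × ℝ) : ℝ≥0∞ :=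
  (∑' R : DyadicRect, Set.indicator R.set (fun _ => ENNReal.ofReal (f R ^ 2)) x) ^ (1/2 : ℝ)

/-- The `H^p(δ²)` quasi-norm `‖f‖_{H^p} = (∫_{[0,1]²} S(f)^p dm)^{1/p}`, valued in `ℝ≥0∞`.
Membership `f ∈ H^p(δ²)` is expressed as `Hnorm p f ≠ ∞`. -/
noncomputable def Hnorm (p : ℝ) (f : DyadicRect → ℝ) : ℝ≥0∞ :=
  (∫⁻ x in unitSq, sqS f x ^ p) ^ (1/p)

/-- `‖f‖₂ = ‖f‖_{H²(δ²)} = (∑_{I×J} f_{I×J}² |I||J|)^{1/2}`. -/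
noncomputable def l2norm (f : DyadicRect → ℝ) : ℝ≥0∞ :=
  (∑' R : DyadicRect, ENNReal.ofReal (f R ^ 2) * ENNReal.ofReal R.area) ^ (1/2 : ℝ)

/-- The level set `F_n = {(s,t) ∈ [0,1]² : S(f)(s,t) > 2^n}`. -/
noncomputable def Fset (f : DyadicRect → ℝ) (n : ℤ) : Set (ℝ × ℝ) :=
  {x ∈ unitSq | (2 : ℝ≥0∞) ^ (n : ℝ) < sqS f x}

/-- The collection `R_n` of dyadic rectangles `I×J` with
`|(I×J) ∩ F_n| > |I×J|/2` and `|(I×J) ∩ F_{n+1}| ≤ |I×J|/2`. -/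
noncomputable def Rcoll (f : DyadicRect → ℝ) (n : ℤ) : Set DyadicRect :=
  {R | ENNReal.ofReal R.area / 2 < volume (R.set ∩ Fset f n) ∧
       volume (R.set ∩ Fset f (n + 1)) ≤ ENNReal.ofReal R.area / 2}

/-- The atom `f_n = ∑_{I×J ∈ R_n} f_{I×J} h_{I×J}`, i.e. the coefficient
sequence of `f` restricted to `R_n`. -/
noncomputable def fAtom (f : DyadicRect → ℝ) (n : ℤ) : DyadicRect → ℝ :=
  (Rcoll f n).indicator f

/-- The point set `R_n* = ⋃_{I×J ∈ R_n} I×J`. -/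
noncomputable def RcollStar (f : DyadicRect → ℝ) (n : ℤ) : Set (ℝ × ℝ) :=
  ⋃ R ∈ Rcoll f n, R.set

/-!
For `R ∈ R_n` at least half of `R` lies outside `F_{n+1}`, where `S(f) ≤ 2^{n+1}`. There the
weight `2^{-n(2-p)} = (2^n)^{p-2}` is at most `4 S(f)^{p-2}` because `p ≤ 2`, so
`2^{-n(2-p)} f_R² |R| ≤ 8 ∫_R f_R² S(f)^{p-2}`. Summing over all rectangles turns `∑_R f_R² 1_R`
back into `S(f)²`, and `S(f)² S(f)^{p-2} ≤ S(f)^p`; hence `c_p = 8` works.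
-/

instance : Countable DyadicInterval :=
  Function.Injective.countable (f := fun I : DyadicInterval => (I.n, I.k)) <| by
    rintro ⟨n, k, _⟩ ⟨n', k', _⟩ h
    cases h
    rfl

namespace DyadicInterval

lemma set_subset_Icc (I : DyadicInterval) : I.set ⊆ Icc 0 1 := by
  have hk : (I.k : ℝ) + 1 ≤ 2 ^ I.n := by exact_mod_cast I.hk
  refine fun x hx => ⟨le_trans (by unfold left; positivity) hx.1, hx.2.le.trans ?_⟩
  rw [right, div_le_one (by positivity)]
  exact hk

lemma volume_set (I : DyadicInterval) : volume I.set = ENNReal.ofReal I.len := by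
  rw [set, Real.volume_Ico, left, right, len]
  congr 1
  field_simp
  ring

end DyadicInterval

namespace DyadicRect

lemma set_subset_unitSq (R : DyadicRect) : R.set ⊆ unitSq :=
  prod_mono R.1.set_subset_Icc R.2.set_subset_Icc

lemma measurableSet_set (R : DyadicRect) : MeasurableSet R.set :=
  measurableSet_Ico.prod measurableSet_Ico

lemma volume_set (R : DyadicRect) : volume R.set = ENNReal.ofReal R.area := by
  rw [set, Measure.volume_eq_prod, Measure.prod_prod, R.1.volume_set, R.2.volume_set,
    ← ENNReal.ofReal_mul (by rw [DyadicInterval.len]; positivity), area]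

end DyadicRect

lemma measure_le_two_mul_measure_sdiff {α : Type*} [MeasurableSpace α] {μ : Measure α}
    {s t : Set α} (hs : μ s ≠ ∞) (h : μ (s ∩ t) ≤ μ s / 2) : μ s ≤ 2 * μ (s \ t) := by
  have hsum : μ s / 2 + μ s / 2 ≤ μ s / 2 + μ (s \ t) := by
    rw [ENNReal.add_halves]
    exact (measure_le_inter_add_sdiff μ s t).trans (add_le_add_left h _)
  have hhalf : μ s / 2 ≤ μ (s \ t) :=
    (ENNReal.add_le_add_iff_left (ENNReal.div_ne_top hs two_ne_zero)).1 hsum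
  calc μ s = 2 * (μ s / 2) := (ENNReal.mul_div_cancel two_ne_zero ENNReal.ofNat_ne_top).symm
    _ ≤ 2 * μ (s \ t) := by gcongr

lemma ENNReal.rpow_mul_rpow_le_rpow_add (x : ℝ≥0∞) {y z : ℝ} (hz : 0 < z) (hyz : 0 < y + z) :
    x ^ y * x ^ z ≤ x ^ (y + z) := by
  rcases eq_or_ne x 0 with rfl | hx0
  · simp [ENNReal.zero_rpow_of_pos hz]
  rcases eq_or_ne x ⊤ with rfl | hxt
  · simp [ENNReal.top_rpow_of_pos hyz]
  exact (ENNReal.rpow_add y z hx0 hxt).ge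

lemma ofReal_two_rpow_le_four_mul_rpow {p : ℝ} (hp0 : 0 ≤ p) (hp2 : p ≤ 2) {n : ℤ} {s : ℝ≥0∞}
    (hs : s ≤ 2 ^ ((n + 1 : ℤ) : ℝ)) :
    ENNReal.ofReal (2 ^ (-(n : ℝ) * (2 - p))) ≤ 4 * s ^ (p - 2) := by
  have hexp : (2 : ℝ≥0∞) ^ (-(n : ℝ) * (2 - p)) ≤
      2 ^ (2 : ℝ) * (2 ^ ((n + 1 : ℤ) : ℝ)) ^ (p - 2) := by
    rw [← ENNReal.rpow_mul, ← ENNReal.rpow_add _ _ two_ne_zero ENNReal.ofNat_ne_top]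
    exact ENNReal.rpow_le_rpow_of_exponent_le one_le_two (by push_cast; nlinarith)
  have hmono : (2 ^ ((n + 1 : ℤ) : ℝ) : ℝ≥0∞) ^ (p - 2) ≤ s ^ (p - 2) := by
    rw [show p - 2 = -(2 - p) by ring, ENNReal.rpow_neg, ENNReal.rpow_neg]
    exact ENNReal.inv_le_inv.2 (ENNReal.rpow_le_rpow hs (by linarith))
  calc ENNReal.ofReal (2 ^ (-(n : ℝ) * (2 - p))) = 2 ^ (-(n : ℝ) * (2 - p)) := by
        rw [← ENNReal.ofReal_rpow_of_pos two_pos, ENNReal.ofReal_ofNat]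
    _ ≤ 2 ^ (2 : ℝ) * (2 ^ ((n + 1 : ℤ) : ℝ)) ^ (p - 2) := hexp
    _ = 4 * (2 ^ ((n + 1 : ℤ) : ℝ)) ^ (p - 2) := by norm_num
    _ ≤ 4 * s ^ (p - 2) := mul_le_mul_right hmono 4

lemma measurable_sqS (f : DyadicRect → ℝ) : Measurable (sqS f) :=
  (Measurable.tsum fun R => measurable_const.indicator R.measurableSet_set).pow_const _

lemma measurableSet_Fset (f : DyadicRect → ℝ) (n : ℤ) : MeasurableSet (Fset f n) :=
  (measurableSet_Icc.prod measurableSet_Icc).inter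
    (measurableSet_lt measurable_const (measurable_sqS f))

lemma sqS_rpow_two (f : DyadicRect → ℝ) (x : ℝ × ℝ) :
    sqS f x ^ (2 : ℝ) =
      ∑' R : DyadicRect, R.set.indicator (fun _ => ENNReal.ofReal (f R ^ 2)) x := by
  rw [sqS, ← ENNReal.rpow_mul]
  norm_num

lemma weighted_sq_mul_area_le {p : ℝ} (hp0 : 0 ≤ p) (hp2 : p ≤ 2) {f : DyadicRect → ℝ} {n : ℤ}
    {R : DyadicRect} (hR : R ∈ Rcoll f n) :
    ENNReal.ofReal (2 ^ (-(n : ℝ) * (2 - p)) * f R ^ 2) * ENNReal.ofReal R.area ≤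
      8 * ∫⁻ x in R.set, ENNReal.ofReal (f R ^ 2) * sqS f x ^ (p - 2) := by
  set F := Fset f (n + 1)
  set w := ENNReal.ofReal (2 ^ (-(n : ℝ) * (2 - p)))
  set c := ENNReal.ofReal (f R ^ 2)
  have hhalf : ENNReal.ofReal R.area ≤ 2 * volume (R.set \ F) := by
    have h := hR.2
    rw [← R.volume_set] at h ⊢
    exact measure_le_two_mul_measure_sdiff (R.volume_set ▸ ENNReal.ofReal_ne_top) h
  have hweight : ∀ x ∈ R.set \ F, w * c ≤ 4 * (c * sqS f x ^ (p - 2)) := fun x hx => by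
    have hS : sqS f x ≤ 2 ^ ((n + 1 : ℤ) : ℝ) :=
      not_lt.1 fun h => hx.2 ⟨R.set_subset_unitSq hx.1, h⟩
    rw [mul_left_comm, mul_comm w]
    gcongr
    exact ofReal_two_rpow_le_four_mul_rpow hp0 hp2 hS
  calc ENNReal.ofReal (2 ^ (-(n : ℝ) * (2 - p)) * f R ^ 2) * ENNReal.ofReal R.area
      = w * c * ENNReal.ofReal R.area := by rw [ENNReal.ofReal_mul (by positivity)]
    _ ≤ 2 * ∫⁻ _ in R.set \ F, w * c := by
        rw [setLIntegral_const, mul_left_comm]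
        gcongr
    _ ≤ 2 * ∫⁻ x in R.set \ F, 4 * (c * sqS f x ^ (p - 2)) := by
        gcongr 1
        exact setLIntegral_mono' (R.measurableSet_set.diff (measurableSet_Fset f _)) hweight
    _ ≤ 2 * ∫⁻ x in R.set, 4 * (c * sqS f x ^ (p - 2)) := by
        gcongr 1
        exact lintegral_mono_set sdiff_subset
    _ = 8 * ∫⁻ x in R.set, c * sqS f x ^ (p - 2) := by
        rw [lintegral_const_mul' _ _ ENNReal.ofNat_ne_top, ← mul_assoc]
        norm_num

lemma rescaled_sq_mul_area_le {p : ℝ} (hp0 : 0 ≤ p) (hp2 : p ≤ 2) {f g : DyadicRect → ℝ}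
    (hg : ∀ (n : ℤ) (R : DyadicRect), R ∈ Rcoll f n →
      g R = (2 : ℝ) ^ (-(n : ℝ) * (2 - p) / 2) * f R)
    (hg0 : ∀ R : DyadicRect, (∀ n : ℤ, R ∉ Rcoll f n) → g R = 0) (R : DyadicRect) :
    ENNReal.ofReal (g R ^ 2) * ENNReal.ofReal R.area ≤
      8 * ∫⁻ x in R.set, ENNReal.ofReal (f R ^ 2) * sqS f x ^ (p - 2) := by
  by_cases hR : ∃ n, R ∈ Rcoll f n
  · obtain ⟨n, hn⟩ := hR
    have hsq : g R ^ 2 = 2 ^ (-(n : ℝ) * (2 - p)) * f R ^ 2 := by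
      rw [hg n R hn, mul_pow, ← Real.rpow_natCast, ← Real.rpow_mul zero_le_two]
      norm_num
    rw [hsq]
    exact weighted_sq_mul_area_le hp0 hp2 hn
  · simp [hg0 R (not_exists.1 hR)]

lemma tsum_setLIntegral_sq_mul (f : DyadicRect → ℝ) {φ : ℝ × ℝ → ℝ≥0∞} (hφ : Measurable φ) :
    ∑' R : DyadicRect, ∫⁻ x in R.set, ENNReal.ofReal (f R ^ 2) * φ x =
      ∫⁻ x in unitSq, sqS f x ^ (2 : ℝ) * φ x := by
  have hR : ∀ R : DyadicRect, ∫⁻ x in R.set, ENNReal.ofReal (f R ^ 2) * φ x =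
      ∫⁻ x in unitSq, R.set.indicator (fun _ => ENNReal.ofReal (f R ^ 2)) x * φ x := by
    intro R
    calc ∫⁻ x in R.set, ENNReal.ofReal (f R ^ 2) * φ x
        = ∫⁻ x in R.set ∩ unitSq, ENNReal.ofReal (f R ^ 2) * φ x := by
          rw [inter_eq_left.2 R.set_subset_unitSq]
      _ = _ := (setLIntegral_indicator R.measurableSet_set _).symm
      _ = _ := lintegral_congr fun x => indicator_mul_left _ _ _
  rw [tsum_congr hR, ← lintegral_tsum]
  · simp_rw [ENNReal.tsum_mul_right, sqS_rpow_two]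
  · exact fun R => ((measurable_const.indicator R.measurableSet_set).mul hφ).aemeasurable

lemma Hnorm_rpow {p : ℝ} (hp : p ≠ 0) (f : DyadicRect → ℝ) :
    Hnorm p f ^ p = ∫⁻ x in unitSq, sqS f x ^ p := by
  rw [Hnorm, ← ENNReal.rpow_mul, one_div, inv_mul_cancel₀ hp, ENNReal.rpow_one]

lemma l2norm_rpow_two (g : DyadicRect → ℝ) :
    l2norm g ^ (2 : ℝ) = ∑' R : DyadicRect, ENNReal.ofReal (g R ^ 2) * ENNReal.ofReal R.area := by
  rw [l2norm, ← ENNReal.rpow_mul]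
  norm_num

/-- the function `g` with `g_{IJ} = 2^{-n(2-p)/2} f_{IJ}` on `R_n`
satisfies `‖g‖₂² ≤ c_p ‖f‖_{H^p(δ²)}^p`. -/
theorem rescaled_atoms_l2_bound (p : ℝ) (hp0 : 0 < p) (hp2 : p ≤ 2) :
    ∃ c : ℝ, 0 < c ∧
      ∀ f : DyadicRect → ℝ, Hnorm p f ≠ ∞ →
        ∀ g : DyadicRect → ℝ,
          (∀ (n : ℤ) (R : DyadicRect), R ∈ Rcoll f n →
            g R = (2:ℝ) ^ (-(n:ℝ) * (2 - p) / 2) * f R) →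
          (∀ R : DyadicRect, (∀ n : ℤ, R ∉ Rcoll f n) → g R = 0) →
          l2norm g ^ (2:ℝ) ≤ ENNReal.ofReal c * Hnorm p f ^ p := by
  refine ⟨8, by norm_num, fun f _ g hg hg0 => ?_⟩
  calc l2norm g ^ (2 : ℝ)
      ≤ ∑' R : DyadicRect, 8 * ∫⁻ x in R.set, ENNReal.ofReal (f R ^ 2) * sqS f x ^ (p - 2) := by
        rw [l2norm_rpow_two]
        exact ENNReal.tsum_le_tsum (rescaled_sq_mul_area_le hp0.le hp2 hg hg0)
    _ = 8 * ∫⁻ x in unitSq, sqS f x ^ (2 : ℝ) * sqS f x ^ (p - 2) := by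
        rw [ENNReal.tsum_mul_left, tsum_setLIntegral_sq_mul f ((measurable_sqS f).pow_const _)]
    _ ≤ 8 * ∫⁻ x in unitSq, sqS f x ^ p := by
        gcongr with x
        rw [mul_comm]
        simpa using
          ENNReal.rpow_mul_rpow_le_rpow_add (sqS f x) two_pos (by linarith : 0 < p - 2 + 2)
    _ = ENNReal.ofReal 8 * Hnorm p f ^ p := by
        rw [Hnorm_rpow hp0.ne', ENNReal.ofReal_ofNat]
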